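/- With notation as above, the directional derivative d/dη SC(softmax(z + η Δz)) at η = 0 is strictly positive if and only if p_{y*} > Σ_k p_k² = ‖p‖₂². -/

import Mathlib

noncomputable def softmax {V : ℕ} (z : Fin V → ℝ) : Fin V → ℝ :=
  fun j => Real.exp (z j) / ∑ l, Real.exp (z l)

noncomputable def SC {V : ℕ} (p : Fin V → ℝ) : ℝ :=
  -(1 / (V : ℝ)) * ∑ j, Real.log ((V : ℝ) * p j)

/-!
On the softmax image, `log (V pⱼ) = log V + zⱼ - log ∑ exp z`, so self-certainty is
`-log V - mean z + logsumexp z`. Differentiating along a direction `v` gives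
`⟨softmax z, v⟩ - mean v`. The ascent direction `δ_{y*} - p` has zero sum, so the derivative is
`⟨p, δ_{y*} - p⟩ = p_{y*} - ‖p‖₂²`.
-/

open Finset Real

namespace Softmax

variable {V : ℕ}

theorem sum_exp_pos [NeZero V] (z : Fin V → ℝ) : 0 < ∑ l, exp (z l) :=
  sum_pos (fun _ _ => exp_pos _) univ_nonempty

theorem sum_softmax [NeZero V] (z : Fin V → ℝ) : ∑ k, softmax z k = 1 := by
  unfold softmax
  rw [← sum_div, div_self (sum_exp_pos z).ne']

theorem log_mul_softmax [NeZero V] (z : Fin V → ℝ) (j : Fin V) :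
    log (V * softmax z j) = log V + z j - log (∑ l, exp (z l)) := by
  rw [softmax, log_mul (NeZero.ne _) (div_pos (exp_pos _) (sum_exp_pos z)).ne',
    log_div (exp_pos _).ne' (sum_exp_pos z).ne', log_exp, add_sub_assoc]

theorem SC_softmax [NeZero V] (z : Fin V → ℝ) :
    SC (softmax z) = -log V - (1 / V) * ∑ j, z j + log (∑ l, exp (z l)) := by
  have hV : (V : ℝ) ≠ 0 := NeZero.ne _
  simp only [SC, log_mul_softmax, sum_sub_distrib, sum_add_distrib, sum_const, card_univ,
    Fintype.card_fin, nsmul_eq_mul]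
  field_simp
  ring

theorem hasDerivAt_add_mul_zero (a b : ℝ) : HasDerivAt (fun t : ℝ => a + t * b) b 0 := by
  simpa using ((hasDerivAt_id (0 : ℝ)).mul_const b).const_add a

theorem hasDerivAt_log_sum_exp_line [NeZero V] (z v : Fin V → ℝ) :
    HasDerivAt (fun t : ℝ => log (∑ l, exp (z l + t * v l))) (∑ l, softmax z l * v l) 0 := by
  have hsum : HasDerivAt (fun t : ℝ => ∑ l, exp (z l + t * v l)) (∑ l, exp (z l) * v l) 0 := by
    simpa using HasDerivAt.fun_sum fun l _ => (hasDerivAt_add_mul_zero (z l) (v l)).exp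
  refine (hsum.log (by simpa using (sum_exp_pos z).ne')).congr_deriv ?_
  simp only [zero_mul, add_zero, sum_div, softmax, div_mul_eq_mul_div]

theorem hasDerivAt_SC_softmax_line [NeZero V] (z v : Fin V → ℝ) :
    HasDerivAt (fun t : ℝ => SC (softmax fun k => z k + t * v k))
      (∑ l, softmax z l * v l - (1 / V) * ∑ k, v k) 0 := by
  have hmean : HasDerivAt (fun t : ℝ => (1 / V : ℝ) * ∑ k, (z k + t * v k))
      ((1 / V) * ∑ k, v k) 0 :=
    (HasDerivAt.fun_sum fun k _ => hasDerivAt_add_mul_zero (z k) (v k)).const_mul _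
  simp only [SC_softmax]
  exact ((hmean.const_sub _).fun_add (hasDerivAt_log_sum_exp_line z v)).congr_deriv (by ring)

end Softmax

section AscentDirection

variable {ι : Type*} [Fintype ι] [DecidableEq ι]

theorem sum_indicator_sub_eq_zero {p : ι → ℝ} (hp : ∑ k, p k = 1) (y : ι) :
    ∑ k, ((if k = y then 1 else 0) - p k) = 0 := by
  rw [sum_sub_distrib, sum_ite_eq' univ y, if_pos (mem_univ y), hp, sub_self]

theorem sum_mul_indicator_sub (p : ι → ℝ) (y : ι) :
    ∑ k, p k * ((if k = y then 1 else 0) - p k) = p y - ∑ k, p k ^ 2 := by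
  simp only [mul_sub, mul_ite, mul_one, mul_zero, sum_sub_distrib, sum_ite_eq', mem_univ,
    if_true, sq]

end AscentDirection

open Softmax in
theorem selfCertainty_deriv_pos_iff_general {V : ℕ} (z : Fin V → ℝ) (ystar : Fin V)
    (d : ℝ)
    (hd : HasDerivAt
      (fun η : ℝ =>
        SC (softmax (fun k => z k + η * ((if k = ystar then (1 : ℝ) else 0) - softmax z k))))
      d 0) :
    0 < d ↔ (∑ k, (softmax z k) ^ 2) < softmax z ystar := by
  have : NeZero V := ⟨ystar.pos.ne'⟩
  rw [hd.unique (hasDerivAt_SC_softmax_line z _), sum_mul_indicator_sub,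
    sum_indicator_sub_eq_zero (sum_softmax z), mul_zero, sub_zero, sub_pos]

/-- The directional derivative of self-certainty along the log-likelihood ascent direction
is strictly positive iff p_{y*} > ‖p‖₂². -/
theorem selfCertainty_deriv_pos_iff {V : ℕ} (hV : 1 ≤ V) (z : Fin V → ℝ) (ystar : Fin V)
    (d : ℝ)
    (hd : HasDerivAt
      (fun η : ℝ =>
        SC (softmax (fun k => z k + η * ((if k = ystar then (1 : ℝ) else 0) - softmax z k))))
      d 0) :
    0 < d ↔ (∑ k, (softmax z k) ^ 2) < softmax z ystar :=
  selfCertainty_deriv_pos_iff_general z ystar d hd
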